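/- In the auxiliary order ▷ of the polynomial path order, if s ▷ t and s is a constructor term (all symbols of s are constructors), then t is ≈-equivalent to a subterm of s; consequently, for a substitution σ into values with sσ a value, tσ is also a value. -/

import Mathlib

inductive Term (F V : Type) : Type
  | var : V → Term F V
  | fn : F → List (Term F V) → Term F V

namespace Term
variable {F V : Type}

mutual
  def size : Term F V → ℕ
    | .var _ => 1
    | .fn _ ts => 1 + sizeList ts
  def sizeList : List (Term F V) → ℕ
    | [] => 0
    | t :: ts => size t + sizeList ts
end

mutual
  def depth : Term F V → ℕ
    | .var _ => 0
    | .fn _ ts => 1 + depthList ts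
  def depthList : List (Term F V) → ℕ
    | [] => 0
    | t :: ts => max (depth t) (depthList ts)
end

mutual
  def width : Term F V → ℕ
    | .var _ => 1
    | .fn _ [] => 1
    | .fn _ (t :: ts) => max (ts.length + 1) (max (width t) (widthList ts))
  def widthList : List (Term F V) → ℕ
    | [] => 1
    | t :: ts => max (width t) (widthList ts)
end

mutual
  def bnorm : Term F V → ℕ
    | .var _ => 1
    | .fn _ ts => 1 + max ts.length (bnormList ts)
  def bnormList : List (Term F V) → ℕ
    | [] => 0
    | t :: ts => max (bnorm t) (bnormList ts)
end

mutual
  def subst (σ : V → Term F V) : Term F V → Term F V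
    | .var x => σ x
    | .fn f ts => .fn f (substList σ ts)
  def substList (σ : V → Term F V) : List (Term F V) → List (Term F V)
    | [] => []
    | t :: ts => subst σ t :: substList σ ts
end

/-- The equivalence on terms induced by an equivalence `eqv` on function symbols:
`s ≈ t` iff `s = t`, or the roots are equivalent and the arguments are pairwise
equivalent up to a permutation. -/
inductive TermEq (eqv : F → F → Prop) : Term F V → Term F V → Prop
  | refl (t) : TermEq eqv t t
  | fn {f g : F} {ss ts : List (Term F V)} (hfg : eqv f g)
      (π : Fin ss.length → Fin ts.length) (hbij : Function.Bijective π)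
      (h : ∀ i, TermEq eqv (ss.get i) (ts.get (π i))) :
      TermEq eqv (.fn f ss) (.fn g ts)

/-- The (reflexive) subterm relation. -/
inductive Subterm : Term F V → Term F V → Prop
  | refl (t) : Subterm t t
  | arg {s t : Term F V} {f : F} {ts : List (Term F V)} :
      t ∈ ts → Subterm s t → Subterm s (.fn f ts)

end Term

namespace Term
variable {F V : Type}

/-- Strict precedence induced by a quasi-precedence. -/
def Precedes (qp : F → F → Prop) (f g : F) : Prop := qp f g ∧ ¬ qp g f

/-- An admissible precedence: symbols strictly above a defined symbol are
defined, and equivalent symbols are either both defined or both constructors. -/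
def Admissible (qp : F → F → Prop) (isDef : F → Prop) : Prop :=
  (∀ f g, Precedes qp f g → isDef g → isDef f) ∧
  (∀ f g, qp f g → qp g f → (isDef f ↔ isDef g))

mutual
  /-- The list of function symbols occurring in a term. -/
  def funcs : Term F V → List F
    | .var _ => []
    | .fn f ts => f :: funcsList ts
  def funcsList : List (Term F V) → List F
    | [] => []
    | t :: ts => funcs t ++ funcsList ts
end

/-- A term is a value (constructor term) if it contains no defined symbol. -/
def IsValue (isDef : F → Prop) (t : Term F V) : Prop := ∀ f ∈ funcs t, ¬ isDef f

/-- The equivalence `≈ₛ` on terms induced by a quasi-precedence and a safe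
mapping: permutative equivalence of arguments of equivalent root symbols, where
the permutation preserves safe argument positions. -/
inductive EqS (qp : F → F → Prop) (safe : F → Finset ℕ) :
    Term F V → Term F V → Prop
  | refl (t) : EqS qp safe t t
  | fn {f g : F} {ss ts : List (Term F V)} (h1 : qp f g) (h2 : qp g f)
      (π : Fin ss.length → Fin ts.length) (hbij : Function.Bijective π)
      (hsafe : ∀ i : Fin ss.length, ((i : ℕ) ∈ safe f ↔ ((π i : ℕ) ∈ safe g)))
      (h : ∀ i, EqS qp safe (ss.get i) (ts.get (π i))) :
      EqS qp safe (.fn f ss) (.fn g ts)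

/-- The auxiliary order `▷` of the polynomial path order (Definition 4). -/
inductive Gsq (qp : F → F → Prop) (safe : F → Finset ℕ) (isDef : F → Prop) :
    Term F V → Term F V → Prop
  | sub {f : F} {ss : List (Term F V)} {t : Term F V} (i : Fin ss.length)
      (hn : isDef f → (i : ℕ) ∉ safe f) (h : Gsq qp safe isDef (ss.get i) t) :
      Gsq qp safe isDef (.fn f ss) t
  | sub_eq {f : F} {ss : List (Term F V)} {t : Term F V} (i : Fin ss.length)
      (hn : isDef f → (i : ℕ) ∉ safe f) (h : EqS qp safe (ss.get i) t) :
      Gsq qp safe isDef (.fn f ss) t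
  | prec {f g : F} {ss ts : List (Term F V)} (hp : Precedes qp f g)
      (hd : isDef f) (h : ∀ t' ∈ ts, Gsq qp safe isDef (.fn f ss) t') :
      Gsq qp safe isDef (.fn f ss) (.fn g ts)

/-- `u` is a proper subterm of `s`. -/
def PSubterm (u s : Term F V) : Prop :=
  ∃ (f : F) (ts : List (Term F V)), s = Term.fn f ts ∧ ∃ t ∈ ts, Subterm u t

/-- The multiset of arguments of `f(ss)` at safe positions. -/
def safeArgs (safe : F → Finset ℕ) (f : F) (ss : List (Term F V)) :
    Multiset (Term F V) :=
  (((ss.zipIdx.map Prod.swap).filter (fun p => decide (p.1 ∈ safe f))).map Prod.snd : List (Term F V))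

/-- The multiset of arguments of `f(ss)` at normal positions. -/
def normalArgs (safe : F → Finset ℕ) (f : F) (ss : List (Term F V)) :
    Multiset (Term F V) :=
  (((ss.zipIdx.map Prod.swap).filter (fun p => decide (p.1 ∉ safe f))).map Prod.snd : List (Term F V))

/-- The polynomial path order `>pop` (Definition 5).  In the clause for
equivalent roots, the Dershowitz–Manna multiset comparisons are given by
explicit decompositions `X + Z` / `Y + Z'` (for normal argument positions the
comparison is strict, `Xn ≠ 0`; for safe positions it is weak). -/
inductive GpopT (qp : F → F → Prop) (safe : F → Finset ℕ) (isDef : F → Prop) :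
    Term F V → Term F V → Prop
  | base {s t : Term F V} : Gsq qp safe isDef s t → GpopT qp safe isDef s t
  | sub {f : F} {ss : List (Term F V)} {t : Term F V} (i : Fin ss.length)
      (h : GpopT qp safe isDef (ss.get i) t) : GpopT qp safe isDef (.fn f ss) t
  | sub_eq {f : F} {ss : List (Term F V)} {t : Term F V} (i : Fin ss.length)
      (h : EqS qp safe (ss.get i) t) : GpopT qp safe isDef (.fn f ss) t
  | prec {f g : F} {ss ts : List (Term F V)} (hp : Precedes qp f g)
      (hd : isDef f) (j0 : Fin ts.length) (hj0 : (j0 : ℕ) ∈ safe g)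
      (h0 : GpopT qp safe isDef (.fn f ss) (ts.get j0))
      (hrest : ∀ j : Fin ts.length, j ≠ j0 →
        Gsq qp safe isDef (.fn f ss) (ts.get j) ∨
        (PSubterm (ts.get j) (.fn f ss) ∧ (j : ℕ) ∈ safe g)) :
      GpopT qp safe isDef (.fn f ss) (.fn g ts)
  | eqv {f g : F} {ss ts : List (Term F V)} (h1 : qp f g) (h2 : qp g f)
      (Xn Yn Zn Zn' Xs Ys Zs Zs' : Multiset (Term F V))
      (hn1 : normalArgs safe f ss = Xn + Zn)
      (hn2 : normalArgs safe g ts = Yn + Zn')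
      (hnrel : Multiset.Rel (EqS qp safe) Zn Zn') (hXn : Xn ≠ 0)
      (pickn : Term F V → Term F V)
      (hnmem : ∀ y ∈ Yn, pickn y ∈ Xn)
      (hnlt : ∀ y ∈ Yn, GpopT qp safe isDef (pickn y) y)
      (hs1 : safeArgs safe f ss = Xs + Zs)
      (hs2 : safeArgs safe g ts = Ys + Zs')
      (hsrel : Multiset.Rel (EqS qp safe) Zs Zs')
      (picks : Term F V → Term F V)
      (hsmem : ∀ y ∈ Ys, picks y ∈ Xs)
      (hslt : ∀ y ∈ Ys, GpopT qp safe isDef (picks y) y) :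
      GpopT qp safe isDef (.fn f ss) (.fn g ts)

end Term

open Term

/-!
A value contains no defined symbol, so the precedence clause of `▷` (which needs a
defined root) never applies below it: `s ▷ t` only descends into arguments and ends
with an `≈ₛ`-step. Substitution instances of subterms of a value-instance are values,
and admissibility makes `≈ₛ` preserve values, since equivalent symbols are
both constructors or both defined.
-/

namespace Term
variable {F V : Type}

@[simp]
lemma subst_fn (σ : V → Term F V) (f : F) (ts : List (Term F V)) :
    subst σ (.fn f ts) = .fn f (ts.map (subst σ)) := by
  rw [subst]
  congr
  induction ts with
  | nil => rfl
  | cons t ts ih => simp [substList, ih]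

lemma mem_funcsList {f : F} {ts : List (Term F V)} :
    f ∈ funcsList ts ↔ ∃ t ∈ ts, f ∈ funcs t := by
  induction ts with
  | nil => simp [funcsList]
  | cons t ts ih => simp [funcsList, ih]

lemma isValue_fn_iff {isDef : F → Prop} {f : F} {ts : List (Term F V)} :
    IsValue isDef (.fn f ts) ↔ ¬ isDef f ∧ ∀ t ∈ ts, IsValue isDef t := by
  simp only [IsValue, funcs, List.mem_cons, mem_funcsList]
  grind

lemma EqS.symm {qp : F → F → Prop} {safe : F → Finset ℕ}
    {s t : Term F V} (h : EqS qp safe s t) : EqS qp safe t s := by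
  induction h with
  | refl t => exact .refl t
  | fn h1 h2 π hbij hsafe _ ih =>
    let e := Equiv.ofBijective π hbij
    refine .fn h2 h1 e.symm e.symm.bijective (fun j => ?_) (fun j => ?_)
    · simpa [e, Equiv.ofBijective_apply_symm_apply] using (hsafe (e.symm j)).symm
    · simpa [e, Equiv.ofBijective_apply_symm_apply] using ih (e.symm j)

lemma Gsq.exists_subterm_eqS {qp : F → F → Prop} {safe : F → Finset ℕ}
    {isDef : F → Prop} {s t : Term F V} (h : Gsq qp safe isDef s t)
    (hs : IsValue isDef s) : ∃ u, Subterm u s ∧ EqS qp safe t u := by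
  induction h with
  | sub i _ _ ih =>
    obtain ⟨u, hu, htu⟩ := ih ((isValue_fn_iff.mp hs).2 _ (List.get_mem _ i))
    exact ⟨u, .arg (List.get_mem _ i) hu, htu⟩
  | sub_eq i _ he => exact ⟨_, .arg (List.get_mem _ i) (.refl _), he.symm⟩
  | prec _ hd _ _ => exact absurd hd (isValue_fn_iff.mp hs).1

lemma IsValue.subst_of_subterm {isDef : F → Prop} {σ : V → Term F V}
    {u s : Term F V} (h : Subterm u s) (hs : IsValue isDef (subst σ s)) :
    IsValue isDef (subst σ u) := by
  induction h with
  | refl => exact hs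
  | arg ht _ ih =>
    rw [subst_fn, isValue_fn_iff] at hs
    exact ih (hs.2 _ (List.mem_map_of_mem ht))

lemma IsValue.subst_of_eqS {qp : F → F → Prop} {safe : F → Finset ℕ}
    {isDef : F → Prop} (hadm : Admissible qp isDef) {σ : V → Term F V}
    {s t : Term F V} (h : EqS qp safe s t) (ht : IsValue isDef (subst σ t)) :
    IsValue isDef (subst σ s) := by
  induction h with
  | refl => exact ht
  | fn h1 h2 π _ _ _ ih =>
    rw [subst_fn, isValue_fn_iff] at ht ⊢
    refine ⟨fun hf => ht.1 ((hadm.2 _ _ h1 h2).mp hf), ?_⟩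
    simp only [List.forall_mem_map, List.forall_mem_iff_get] at ht ⊢
    exact fun i => ih i (ht.2 (π i))

end Term

/-- In the auxiliary order `▷` of the polynomial path order, if `s ▷ t` and `s`
is a constructor term then `t` is `≈`-equivalent to a subterm of `s`;
consequently, for a substitution `σ` into values with `sσ` a value, `tσ` is
also a value. -/
theorem gsq_on_values {F V : Type} (qp : F → F → Prop)
    (hrefl : Reflexive qp) (htrans : Transitive qp)
    (safe : F → Finset ℕ) (isDef : F → Prop)
    (hadm : Admissible qp isDef)
    (s t : Term F V) (h : Gsq qp safe isDef s t) (hs : IsValue isDef s) :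
    (∃ u, Subterm u s ∧ EqS qp safe t u) ∧
    (∀ σ : V → Term F V, (∀ x, IsValue isDef (σ x)) →
      IsValue isDef (subst σ s) → IsValue isDef (subst σ t)) := by
  obtain ⟨u, hus, htu⟩ := h.exists_subterm_eqS hs
  exact ⟨⟨u, hus, htu⟩, fun σ _ hσs => (hσs.subst_of_subterm hus).subst_of_eqS hadm htu⟩
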